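/- arXiv:2108.06892 — 3 statements merged into one kernel-verified Lean document; each statement's English description precedes it below -/
import Mathlib

section
/- Let X, Y be jointly standard normal with covariance r, and i, j ≥ 1 integers. Then there exists a polynomial f (depending on i,j) with f(0) = 1 such that E[X^{2i−1}Y^{2j−1}] = (2i−1)!!·(2j−1)!!·r·f(r²). -/
open MeasureTheory ProbabilityTheory Nat

/-- `X` is a centered Gaussian random vector with covariance matrix `R`:
every linear combination `∑ tᵢ Xᵢ` is Gaussian with mean `0` and variance `tᵀRt`. -/
def IsCenteredGaussian {Ω : Type*} [MeasureSpace Ω] {n : ℕ}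
    (X : Ω → Fin n → ℝ) (R : Matrix (Fin n) (Fin n) ℝ) : Prop :=
  ∀ t : Fin n → ℝ,
    Measure.map (fun ω => ∑ i, t i * X ω i) (volume : Measure Ω)
      = gaussianReal 0 (Real.toNNReal (∑ i, ∑ j, t i * R i j * t j))

/-! For every `t` with `t² + 2rt + 1 ≥ 0`, the variable `tX + Y` is centered Gaussian with
variance `t² + 2rt + 1`, so `E[(tX + Y)^(2m)] = (2m-1)‼ (t² + 2rt + 1)^m`. Expanding both sides
in `t` and comparing coefficients of `t^(2i-1)`, with `m = i + j - 1`, gives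
`C(2m, 2i-1) E[X^(2i-1) Y^(2j-1)] = (2m-1)‼ [t^(2i-1)] (t² + 2rt + 1)^m`. Only odd powers of
`2rt` contribute to an odd coefficient, so it is `r` times a polynomial in `r²`, with constant
term `2m C(m-1, i-1) = C(2m, 2i-1) (2i-1)‼ (2j-1)‼ / (2m-1)‼`. -/

open Real Polynomial Finset
open scoped NNReal ENNReal

theorem Nat.doubleFactorial_mul_choose (k l : ℕ) :
    (2 * (k + l) + 1)‼ * (2 * (k + l + 1) * (k + l).choose k)
      = (2 * (k + l + 1)).choose (2 * k + 1) * ((2 * k + 1)‼ * (2 * l + 1)‼) := by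
  refine Nat.eq_of_mul_eq_mul_right (Nat.mul_pos (2 * k).doubleFactorial_pos
    (2 * l).doubleFactorial_pos) ?_
  have hkl := add_choose_mul_factorial_mul_factorial l k
  have hab := add_choose_mul_factorial_mul_factorial (2 * l + 1) (2 * k + 1)
  rw [add_comm l k] at hkl
  rw [show 2 * l + 1 + (2 * k + 1) = 2 * (k + l + 1) by ring] at hab
  calc (2 * (k + l) + 1)‼ * (2 * (k + l + 1) * (k + l).choose k) * ((2 * k)‼ * (2 * l)‼)
      = (2 * (k + l) + 1 + 1)‼ * (2 * (k + l) + 1)‼ := by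
        rw [show 2 * (k + l) + 1 + 1 = 2 * (k + l + 1) by ring, doubleFactorial_two_mul,
          doubleFactorial_two_mul, doubleFactorial_two_mul, factorial_succ, ← hkl]
        ring
    _ = (2 * (k + l + 1)).choose (2 * k + 1) * (2 * l + 1)! * (2 * k + 1)! := by
        rw [← factorial_eq_mul_doubleFactorial, hab, mul_add_one]
    _ = _ := by
        rw [factorial_eq_mul_doubleFactorial, factorial_eq_mul_doubleFactorial]
        ring

theorem coeff_X_sq_add_one_pow {R : Type*} [CommSemiring R] (N d : ℕ) :
    (((X : R[X]) ^ 2 + 1) ^ N).coeff d = if 2 ∣ d then (N.choose (d / 2) : R) else 0 := by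
  rw [show ((X : R[X]) ^ 2 + 1) ^ N = expand R 2 ((X + 1) ^ N) by simp, coeff_expand two_pos,
    coeff_X_add_one_pow]

noncomputable def oddTrinomialCoeff (m k : ℕ) : ℝ[X] :=
  ∑ u ∈ range (k + 1), C ((m.choose (2 * u + 1) * (m - (2 * u + 1)).choose (k - u) : ℕ)
    * 2 ^ (2 * u + 1) : ℝ) * X ^ u

theorem oddTrinomialCoeff_eval_zero (m k : ℕ) :
    (oddTrinomialCoeff m k).eval 0 = 2 * m * (m - 1).choose k := by
  simp [oddTrinomialCoeff, eval_finsetSum, sum_range_succ', mul_comm, mul_left_comm, mul_assoc]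

theorem coeff_X_sq_add_C_mul_X_add_one_pow_odd (r : ℝ) (m k : ℕ) :
    ((X ^ 2 + C (2 * r) * X + 1) ^ m).coeff (2 * k + 1)
      = r * (oddTrinomialCoeff m k).eval (r ^ 2) := by
  set T : ℕ → ℝ := fun q ↦ m.choose q * (2 * r) ^ q *
    if q ≤ 2 * k + 1 ∧ 2 ∣ 2 * k + 1 - q then ((m - q).choose ((2 * k + 1 - q) / 2) : ℝ)
    else 0
  have hterm (q : ℕ) :
      ((C (2 * r) * X) ^ q * (X ^ 2 + 1) ^ (m - q) * (m.choose q : ℝ[X])).coeff (2 * k + 1)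
        = T q := by
    rw [← C_eq_natCast, mul_comm, mul_pow, ← C_pow, mul_assoc, coeff_C_mul, coeff_C_mul,
      coeff_X_pow_mul', coeff_X_sq_add_one_pow, ← mul_assoc, ← ite_and]
  calc ((X ^ 2 + C (2 * r) * X + 1) ^ m).coeff (2 * k + 1)
      = ∑ q ∈ range (m + 1), T q := by
        rw [show (X ^ 2 + C (2 * r) * X + 1 : ℝ[X]) = C (2 * r) * X + (X ^ 2 + 1) by ring,
          add_pow, finsetSum_coeff]
        exact sum_congr rfl fun q _ ↦ hterm q
    _ = ∑ u ∈ range (k + 1), T (2 * u + 1) := by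
        symm
        refine sum_bij_ne_zero (fun u _ _ ↦ 2 * u + 1) ?_ (fun _ _ _ _ _ _ h ↦ by omega) ?_
          (fun _ _ _ ↦ rfl)
        · intro u _ hu
          rw [mem_range]
          by_contra h
          simp [T, Nat.choose_eq_zero_of_lt (show m < 2 * u + 1 by omega)] at hu
        · intro q _ hq
          have hcond : q ≤ 2 * k + 1 ∧ 2 ∣ 2 * k + 1 - q := by
            by_contra h
            simp [T, h] at hq
          refine ⟨q / 2, mem_range.2 (by omega), ?_, by omega⟩
          rwa [show 2 * (q / 2) + 1 = q by omega]
    _ = r * (oddTrinomialCoeff m k).eval (r ^ 2) := by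
        rw [oddTrinomialCoeff, eval_finsetSum, mul_sum]
        refine sum_congr rfl fun u hu ↦ ?_
        rw [mem_range] at hu
        have hcond : 2 * u + 1 ≤ 2 * k + 1 ∧ 2 ∣ 2 * k + 1 - (2 * u + 1) :=
          ⟨by omega, k - u, by omega⟩
        simp only [T, if_pos hcond, show (2 * k + 1 - (2 * u + 1)) / 2 = k - u by omega,
          eval_mul, eval_C, eval_pow, eval_X]
        push_cast
        ring

theorem integrable_pow_mul_exp_neg_mul_sq {b : ℝ} (hb : 0 < b) (n : ℕ) :
    Integrable fun x : ℝ ↦ x ^ n * exp (-b * x ^ 2) := by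
  simpa [rpow_natCast] using
    integrable_rpow_mul_exp_neg_mul_sq hb (s := n) (by linarith [n.cast_nonneg (α := ℝ)])

theorem integral_pow_add_two_mul_exp_neg_mul_sq {b : ℝ} (hb : 0 < b) (n : ℕ) :
    ∫ x : ℝ, x ^ (n + 2) * exp (-b * x ^ 2)
      = (n + 1) / (2 * b) * ∫ x : ℝ, x ^ n * exp (-b * x ^ 2) := by
  have hderiv (x : ℝ) : HasDerivAt (fun x ↦ x ^ (n + 1) * exp (-b * x ^ 2))
      ((n + 1) * (x ^ n * exp (-b * x ^ 2)) - 2 * b * (x ^ (n + 2) * exp (-b * x ^ 2))) x := by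
    refine ((hasDerivAt_pow (n + 1) x).fun_mul
      ((hasDerivAt_pow 2 x).const_mul (-b)).exp).congr_deriv ?_
    push_cast
    ring
  have hn := (integrable_pow_mul_exp_neg_mul_sq hb n).const_mul ((n : ℝ) + 1)
  have hn2 := (integrable_pow_mul_exp_neg_mul_sq hb (n + 2)).const_mul (2 * b)
  have h := integral_eq_zero_of_hasDerivAt_of_integrable hderiv (hn.sub hn2)
    (integrable_pow_mul_exp_neg_mul_sq hb (n + 1))
  rw [integral_sub hn hn2, integral_const_mul, integral_const_mul, sub_eq_zero] at h
  rw [div_mul_eq_mul_div, eq_div_iff (by positivity)]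
  linarith

theorem integral_pow_add_two_gaussianReal (v : ℝ≥0) (n : ℕ) :
    ∫ x, x ^ (n + 2) ∂gaussianReal 0 v = (n + 1) * v * ∫ x, x ^ n ∂gaussianReal 0 v := by
  rcases eq_or_ne v 0 with rfl | hv
  · simp [gaussianReal_zero_var]
  have hpdf (m : ℕ) : ∫ x, x ^ m ∂gaussianReal 0 v
      = (√(2 * π * v))⁻¹ * ∫ x, x ^ m * exp (-(2 * v : ℝ)⁻¹ * x ^ 2) := by
    rw [integral_gaussianReal_eq_integral_smul hv, ← integral_const_mul]
    congr 1 with x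
    simp only [gaussianPDFReal, smul_eq_mul, sub_zero]
    ring_nf
  have hb : (0 : ℝ) < (2 * v : ℝ)⁻¹ := by positivity
  rw [hpdf, hpdf, integral_pow_add_two_mul_exp_neg_mul_sq hb]
  field_simp

theorem integral_two_mul_pow_gaussianReal (v : ℝ≥0) (k : ℕ) :
    ∫ x, x ^ (2 * k) ∂gaussianReal 0 v = (2 * k - 1)‼ * (v : ℝ) ^ k := by
  induction k with
  | zero => simp
  | succ k ih =>
    rw [Nat.mul_add_one, integral_pow_add_two_gaussianReal, ih,
      show 2 * k + 2 - 1 = 2 * k + 1 by omega, doubleFactorial_add_one]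
    push_cast
    ring

namespace IsCenteredGaussian

variable {Ω : Type*} [MeasureSpace Ω]

section General

variable {n : ℕ} {X : Ω → Fin n → ℝ} {R : Matrix (Fin n) (Fin n) ℝ}

theorem hasLaw (hX : IsCenteredGaussian X R) (t : Fin n → ℝ) :
    HasLaw (fun ω ↦ ∑ i, t i * X ω i)
      (gaussianReal 0 (∑ i, ∑ j, t i * R i j * t j).toNNReal) :=
  ⟨aemeasurable_of_map_neZero (by rw [hX t]; infer_instance), hX t⟩

theorem isProbabilityMeasure (hX : IsCenteredGaussian X R) :
    IsProbabilityMeasure (volume : Measure Ω) :=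
  (hX.hasLaw 0).isProbabilityMeasure

theorem hasLaw_apply (hX : IsCenteredGaussian X R) (i : Fin n) :
    HasLaw (fun ω ↦ X ω i) (gaussianReal 0 (R i i).toNNReal) := by
  convert hX.hasLaw (Pi.single i 1) using 3 <;> simp [Pi.single_apply]

theorem memLp_apply (hX : IsCenteredGaussian X R) (i : Fin n) {p : ℝ≥0∞} (hp : p ≠ ∞) :
    MemLp (fun ω ↦ X ω i) p := by
  have h := hX.hasLaw_apply i
  have := memLp_id_gaussianReal' (μ := 0) (v := (R i i).toNNReal) p hp
  rwa [← h.map_eq, memLp_map_measure_iff aestronglyMeasurable_id h.aemeasurable] at this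

theorem integrable_pow_mul_pow (hX : IsCenteredGaussian X R) (i j : Fin n) (p q : ℕ) :
    Integrable (fun ω ↦ X ω i ^ p * X ω j ^ q) := by
  have := hX.isProbabilityMeasure
  have hi := (hX.memLp_apply i (ENNReal.natCast_ne_top (2 * p))).integrable_norm_pow'
  have hj := (hX.memLp_apply j (ENNReal.natCast_ne_top (2 * q))).integrable_norm_pow'
  have hmeas := ((hX.hasLaw_apply i).aemeasurable.pow_const p).mul
    ((hX.hasLaw_apply j).aemeasurable.pow_const q)
  refine (hi.add hj).mono' hmeas.aestronglyMeasurable (ae_of_all _ fun ω ↦ ?_)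
  rw [Pi.add_apply, norm_mul, norm_pow, norm_pow, pow_mul', pow_mul']
  nlinarith [two_mul_le_add_sq (‖X ω i‖ ^ p) (‖X ω j‖ ^ q), sq_nonneg (‖X ω i‖ ^ p),
    sq_nonneg (‖X ω j‖ ^ q)]

theorem integral_mul_add_pow (hX : IsCenteredGaussian X R) (i j : Fin n) (t : ℝ) (N : ℕ) :
    ∫ ω, (t * X ω i + X ω j) ^ N
      = ∑ s ∈ range (N + 1), N.choose s * (∫ ω, X ω i ^ s * X ω j ^ (N - s)) * t ^ s := by
  have hexpand (ω : Ω) : (t * X ω i + X ω j) ^ N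
      = ∑ s ∈ range (N + 1), N.choose s * t ^ s * (X ω i ^ s * X ω j ^ (N - s)) := by
    rw [add_pow]
    exact sum_congr rfl fun s _ ↦ by ring
  rw [integral_congr_ae (ae_of_all _ hexpand),
    integral_finsetSum _ fun s _ ↦ (hX.integrable_pow_mul_pow i j s (N - s)).const_mul _]
  refine sum_congr rfl fun s _ ↦ ?_
  rw [integral_const_mul]
  ring

end General

section Correlated

variable {r : ℝ} {X : Ω → Fin 2 → ℝ}

theorem hasLaw_mul_add (hX : IsCenteredGaussian X !![1, r; r, 1]) (t : ℝ) :
    HasLaw (fun ω ↦ t * X ω 0 + X ω 1) (gaussianReal 0 (t ^ 2 + 2 * r * t + 1).toNNReal) := by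
  convert hX.hasLaw ![t, 1] using 3
  · simp [Fin.sum_univ_two]
  · simp [Fin.sum_univ_two]
    ring

theorem integral_mul_add_pow_two_mul (hX : IsCenteredGaussian X !![1, r; r, 1]) {t : ℝ}
    (ht : 0 ≤ t ^ 2 + 2 * r * t + 1) (m : ℕ) :
    ∫ ω, (t * X ω 0 + X ω 1) ^ (2 * m) = (2 * m - 1)‼ * (t ^ 2 + 2 * r * t + 1) ^ m := by
  have h := (hX.hasLaw_mul_add t).integral_comp (f := fun x ↦ x ^ (2 * m)) (by fun_prop)
  simp only [Function.comp_def] at h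
  rw [h, integral_two_mul_pow_gaussianReal, Real.coe_toNNReal _ ht]

theorem choose_mul_integral_pow_mul_pow (hX : IsCenteredGaussian X !![1, r; r, 1]) (m a : ℕ) :
    (2 * m).choose a * ∫ ω, X ω 0 ^ a * X ω 1 ^ (2 * m - a)
      = (2 * m - 1)‼ * ((Polynomial.X ^ 2 + C (2 * r) * Polynomial.X + 1) ^ m).coeff a := by
  set P : ℝ[X] := ∑ s ∈ range (2 * m + 1),
    C ((2 * m).choose s * ∫ ω, X ω 0 ^ s * X ω 1 ^ (2 * m - s)) * Polynomial.X ^ s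
  have hP :
      P = C ((2 * m - 1)‼ : ℝ) * (Polynomial.X ^ 2 + C (2 * r) * Polynomial.X + 1) ^ m := by
    -- `IsCenteredGaussian` clamps negative variances to `0`, so the moment formula is only
    -- used at `t ≥ 2|r|`, where `t ^ 2 + 2 * r * t + 1 > 0`.
    refine eq_of_infinite_eval_eq _ _ ((Set.Ici_infinite (2 * |r|)).mono fun t ht ↦ ?_)
    have ht' : 0 ≤ t ^ 2 + 2 * r * t + 1 := by
      nlinarith [neg_abs_le r, abs_nonneg r, Set.mem_Ici.1 ht]
    simp only [Set.mem_ofPred_eq, P, eval_finsetSum, eval_mul, eval_C, eval_pow, eval_X, eval_add,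
      eval_one]
    rw [← hX.integral_mul_add_pow, hX.integral_mul_add_pow_two_mul ht']
  have h := congrArg (coeff · a) hP
  simp only [P, finsetSum_coeff, coeff_C_mul, coeff_X_pow, mul_ite, mul_one, mul_zero,
    sum_ite_eq, mem_range] at h
  rw [← h]
  split_ifs with ha
  · rfl
  · rw [Nat.choose_eq_zero_of_lt (by omega), Nat.cast_zero, zero_mul]

end Correlated

end IsCenteredGaussian

/-- For integers `i, j ≥ 1` there is a polynomial `f` with `f(0) = 1` such that whenever `X, Y`
are jointly standard normal with covariance `r`,
`E[X^{2i−1} Y^{2j−1}] = (2i−1)!! (2j−1)!! r f(r²)`. -/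
theorem gaussian_odd_mixed_moment (i j : ℕ) (hi : 1 ≤ i) (hj : 1 ≤ j) :
    ∃ f : Polynomial ℝ, f.eval 0 = 1 ∧
      ∀ (Ω : Type) [MeasureSpace Ω] (r : ℝ) (X : Ω → Fin 2 → ℝ),
        IsCenteredGaussian X !![1, r; r, 1] →
        (∫ ω, (X ω 0) ^ (2 * i - 1) * (X ω 1) ^ (2 * j - 1))
          = ((2 * i - 1)‼ : ℝ) * ((2 * j - 1)‼ : ℝ) * r * f.eval (r ^ 2) := by
  obtain ⟨k, rfl⟩ : ∃ k, i = k + 1 := ⟨i - 1, by omega⟩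
  obtain ⟨l, rfl⟩ : ∃ l, j = l + 1 := ⟨j - 1, by omega⟩
  have hN : ((2 * (k + l + 1)).choose (2 * k + 1) : ℝ) ≠ 0 := by
    exact_mod_cast (Nat.choose_pos (by omega)).ne'
  have hA : ((2 * k + 1)‼ : ℝ) ≠ 0 := by exact_mod_cast (Nat.doubleFactorial_pos _).ne'
  have hB : ((2 * l + 1)‼ : ℝ) ≠ 0 := by exact_mod_cast (Nat.doubleFactorial_pos _).ne'
  set c : ℝ := (2 * (k + l) + 1)‼ /
    ((2 * (k + l + 1)).choose (2 * k + 1) * ((2 * k + 1)‼ * (2 * l + 1)‼))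
  refine ⟨C c * oddTrinomialCoeff (k + l + 1) k, ?_, fun Ω _ r X hX ↦ ?_⟩
  · rw [eval_mul, eval_C, oddTrinomialCoeff_eval_zero, div_mul_eq_mul_div,
      div_eq_one_iff_eq (mul_ne_zero hN (mul_ne_zero hA hB)), Nat.add_sub_cancel]
    exact_mod_cast Nat.doubleFactorial_mul_choose k l
  · have h := hX.choose_mul_integral_pow_mul_pow (k + l + 1) (2 * k + 1)
    rw [coeff_X_sq_add_C_mul_X_add_one_pow_odd,
      show 2 * (k + l + 1) - 1 = 2 * (k + l) + 1 by omega,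
      show 2 * (k + l + 1) - (2 * k + 1) = 2 * l + 1 by omega] at h
    rw [show 2 * (k + 1) - 1 = 2 * k + 1 by omega, show 2 * (l + 1) - 1 = 2 * l + 1 by omega,
      eval_mul, eval_C]
    simp only [c]
    field_simp
    linear_combination h
end

section
/- Let (Uᵢ,Vᵢ), i = 1..k (k ≥ 2), be independent random vectors with C := 3∏ᵢ(1 + ‖Uᵢ‖_k)(1 + ‖Vᵢ‖_k) < ∞. Then |Cov(∏ᵢUᵢ, ∏ᵢVᵢ)| ≤ C^k · ∑ᵢ |Cov(Uᵢ, Vᵢ)|. -/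
open MeasureTheory ProbabilityTheory

/-! Independence of the pairs factorizes all three expectations, so the covariance equals
`∏ᵢ E[UᵢVᵢ] - ∏ᵢ E[Uᵢ] E[Vᵢ]`. A difference of two products whose factors are bounded by
`Mᵢ ≥ 1` is at most `(∏ᵢ Mᵢ) ∑ᵢ |aᵢ - bᵢ|` (telescoping). Here `Mᵢ = (1 + E|Uᵢ|ᵏ)(1 + E|Vᵢ|ᵏ)`
works because `|xy| ≤ 1 + |x|ᵏ + |y|ᵏ` for `k ≥ 2`, and `1 + E|ξ|ᵏ ≤ (1 + ‖ξ‖ₖ)ᵏ`. -/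

theorem abs_prod_sub_prod_le {ι : Type*} {a b M : ι → ℝ} (hM : ∀ i, 1 ≤ M i)
    (ha : ∀ i, |a i| ≤ M i) (hb : ∀ i, |b i| ≤ M i) (s : Finset ι) :
    |∏ i ∈ s, a i - ∏ i ∈ s, b i| ≤ (∏ i ∈ s, M i) * ∑ i ∈ s, |a i - b i| := by
  classical
  induction s using Finset.induction with
  | empty => simp
  | @insert i s hi ih =>
    simp only [Finset.prod_insert hi, Finset.sum_insert hi]
    have hMs : 0 ≤ ∏ j ∈ s, M j := Finset.prod_nonneg fun j _ => zero_le_one.trans (hM j)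
    have hbs : |∏ j ∈ s, b j| ≤ ∏ j ∈ s, M j := by
      rw [Finset.abs_prod]
      exact Finset.prod_le_prod (fun j _ => abs_nonneg _) fun j _ => hb j
    calc |a i * ∏ j ∈ s, a j - b i * ∏ j ∈ s, b j|
        = |a i * (∏ j ∈ s, a j - ∏ j ∈ s, b j) + (a i - b i) * ∏ j ∈ s, b j| := by ring_nf
      _ ≤ |a i| * |∏ j ∈ s, a j - ∏ j ∈ s, b j| + |a i - b i| * |∏ j ∈ s, b j| := by
          rw [← abs_mul, ← abs_mul]; exact abs_add_le _ _
      _ ≤ M i * ((∏ j ∈ s, M j) * ∑ j ∈ s, |a j - b j|) + |a i - b i| * ∏ j ∈ s, M j := by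
          gcongr
          · exact (abs_nonneg _).trans (ha i)
          · exact ha i
      _ ≤ (M i * ∏ j ∈ s, M j) * (|a i - b i| + ∑ j ∈ s, |a j - b j|) := by
          nlinarith [mul_nonneg (mul_nonneg (sub_nonneg.2 (hM i)) hMs) (abs_nonneg (a i - b i))]

theorem abs_le_one_add_abs_pow {k : ℕ} (hk : k ≠ 0) (x : ℝ) : |x| ≤ 1 + |x| ^ k := by
  rcases le_total |x| 1 with h | h
  · linarith [pow_nonneg (abs_nonneg x) k]
  · linarith [le_self_pow₀ h hk]

theorem sq_abs_le_one_add_abs_pow {k : ℕ} (hk : 2 ≤ k) (x : ℝ) : |x| ^ 2 ≤ 1 + |x| ^ k := by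
  rcases le_total |x| 1 with h | h
  · linarith [pow_le_one₀ (abs_nonneg x) h (n := 2), pow_nonneg (abs_nonneg x) k]
  · linarith [pow_le_pow_right₀ h hk]

theorem abs_mul_le_one_add_abs_pow_add_abs_pow {k : ℕ} (hk : 2 ≤ k) (x y : ℝ) :
    |x * y| ≤ 1 + |x| ^ k + |y| ^ k := by
  rw [abs_mul]
  nlinarith [two_mul_le_add_sq |x| |y|, sq_abs_le_one_add_abs_pow hk x,
    sq_abs_le_one_add_abs_pow hk y, pow_nonneg (abs_nonneg x) k, pow_nonneg (abs_nonneg y) k]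

theorem one_add_le_one_add_rpow_inv_pow {k : ℕ} (hk : k ≠ 0) {x : ℝ} (hx : 0 ≤ x) :
    1 + x ≤ (1 + x ^ (k⁻¹ : ℝ)) ^ k := by
  calc 1 + x = 1 ^ k + (x ^ (k⁻¹ : ℝ)) ^ k := by rw [one_pow, Real.rpow_inv_natCast_pow hx hk]
    _ ≤ (1 + x ^ (k⁻¹ : ℝ)) ^ k := pow_add_pow_le zero_le_one (by positivity) hk

theorem MeasureTheory.MemLp.integrable_abs_pow {Ω : Type*} {mΩ : MeasurableSpace Ω}
    {μ : Measure Ω} {k : ℕ} {f : Ω → ℝ} (hf : MemLp f k μ) (hk : k ≠ 0) :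
    Integrable (fun ω => |f ω| ^ k) μ := by
  simpa only [Real.norm_eq_abs] using hf.integrable_norm_pow hk

section Moments

variable {Ω : Type*} {mΩ : MeasurableSpace Ω} {μ : Measure Ω} [IsProbabilityMeasure μ]
  {k : ℕ} {f g : Ω → ℝ}

theorem abs_integral_le_one_add_integral_abs_pow (hk : k ≠ 0) (hf : MemLp f k μ) :
    |∫ ω, f ω ∂μ| ≤ 1 + ∫ ω, |f ω| ^ k ∂μ := by
  have hfk := hf.integrable_abs_pow hk
  calc |∫ ω, f ω ∂μ| ≤ ∫ ω, 1 + |f ω| ^ k ∂μ :=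
        norm_integral_le_of_norm_le (f := f) ((integrable_const 1).fun_add hfk)
          (ae_of_all _ fun ω => abs_le_one_add_abs_pow hk (f ω))
    _ = 1 + ∫ ω, |f ω| ^ k ∂μ := by
        rw [integral_add (integrable_const 1) hfk, integral_const, probReal_univ, one_smul]

theorem abs_integral_mul_le_one_add_integral_abs_pow_add_integral_abs_pow (hk : 2 ≤ k)
    (hf : MemLp f k μ) (hg : MemLp g k μ) :
    |∫ ω, f ω * g ω ∂μ| ≤ 1 + ∫ ω, |f ω| ^ k ∂μ + ∫ ω, |g ω| ^ k ∂μ := by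
  have hfk := hf.integrable_abs_pow (by omega)
  have hgk := hg.integrable_abs_pow (by omega)
  calc |∫ ω, f ω * g ω ∂μ| ≤ ∫ ω, 1 + |f ω| ^ k + |g ω| ^ k ∂μ :=
        norm_integral_le_of_norm_le (f := fun ω => f ω * g ω)
          (((integrable_const 1).fun_add hfk).fun_add hgk)
          (ae_of_all _ fun ω => abs_mul_le_one_add_abs_pow_add_abs_pow hk (f ω) (g ω))
    _ = 1 + ∫ ω, |f ω| ^ k ∂μ + ∫ ω, |g ω| ^ k ∂μ := by
        rw [integral_add ((integrable_const 1).fun_add hfk) hgk,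
          integral_add (integrable_const 1) hfk, integral_const, probReal_univ, one_smul]

end Moments

theorem ProbabilityTheory.iIndepFun.integral_prod_mul_prod_sub_eq_prod_sub_prod {Ω ι : Type*}
    {mΩ : MeasurableSpace Ω} {μ : Measure Ω} [Fintype ι] {U V : ι → Ω → ℝ}
    (hU : ∀ i, AEMeasurable (U i) μ) (hV : ∀ i, AEMeasurable (V i) μ)
    (h : iIndepFun (fun i ω => (U i ω, V i ω)) μ) :
    (∫ ω, (∏ i, U i ω) * ∏ i, V i ω ∂μ) - (∫ ω, ∏ i, U i ω ∂μ) * (∫ ω, ∏ i, V i ω ∂μ)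
      = ∏ i, ∫ ω, U i ω * V i ω ∂μ - ∏ i, (∫ ω, U i ω ∂μ) * ∫ ω, V i ω ∂μ := by
  have hUV i : AEMeasurable (fun ω => (U i ω, V i ω)) μ := (hU i).prodMk (hV i)
  have hfst := h.integral_fun_prod_comp (f := fun _ p => p.1) hUV fun _ =>
    measurable_fst.aestronglyMeasurable
  have hsnd := h.integral_fun_prod_comp (f := fun _ p => p.2) hUV fun _ =>
    measurable_snd.aestronglyMeasurable
  have hmul := h.integral_fun_prod_comp (f := fun _ p => p.1 * p.2) hUV fun _ =>
    (measurable_fst.mul measurable_snd).aestronglyMeasurable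
  simpa only [Finset.prod_mul_distrib] using
    congr_arg₂ (· - ·) hmul (congr_arg₂ (· * ·) hfst hsnd)

/-- Let `(Uᵢ,Vᵢ)`, `i = 1,…,k` (`k ≥ 2`), be independent random vectors, each coordinate in `Lᵏ`,
and set `C = 3 ∏ᵢ (1 + ‖Uᵢ‖ₖ)(1 + ‖Vᵢ‖ₖ)` where `‖ξ‖ₖ = (E|ξ|ᵏ)^{1/k}`. Then
`|Cov(∏ᵢ Uᵢ, ∏ᵢ Vᵢ)| ≤ Cᵏ ∑ᵢ |Cov(Uᵢ, Vᵢ)|`. -/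
theorem abs_cov_prod_le {Ω : Type*} [MeasureSpace Ω]
    [IsProbabilityMeasure (volume : Measure Ω)]
    (k : ℕ) (hk : 2 ≤ k) (U V : Fin k → Ω → ℝ)
    (hU : ∀ i, MemLp (U i) k volume) (hV : ∀ i, MemLp (V i) k volume)
    (hindep : iIndepFun
      (fun i ω => (U i ω, V i ω)) (volume : Measure Ω)) :
    |(∫ ω, (∏ i, U i ω) * ∏ i, V i ω) - (∫ ω, ∏ i, U i ω) * (∫ ω, ∏ i, V i ω)|
      ≤ (3 * ∏ i, (1 + (∫ ω, |U i ω| ^ k) ^ ((k : ℝ)⁻¹))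
            * (1 + (∫ ω, |V i ω| ^ k) ^ ((k : ℝ)⁻¹))) ^ k
        * ∑ i, |(∫ ω, U i ω * V i ω) - (∫ ω, U i ω) * (∫ ω, V i ω)| := by
  have hk0 : k ≠ 0 := by omega
  set α : Fin k → ℝ := fun i => ∫ ω, |U i ω| ^ k
  set β : Fin k → ℝ := fun i => ∫ ω, |V i ω| ^ k
  have hα i : 0 ≤ α i := integral_nonneg fun ω => by positivity
  have hβ i : 0 ≤ β i := integral_nonneg fun ω => by positivity
  have hmean_mul i : |∫ ω, U i ω * V i ω| ≤ (1 + α i) * (1 + β i) := by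
    nlinarith [abs_integral_mul_le_one_add_integral_abs_pow_add_integral_abs_pow hk (hU i) (hV i),
      mul_nonneg (hα i) (hβ i)]
  have hmul_mean i : |(∫ ω, U i ω) * ∫ ω, V i ω| ≤ (1 + α i) * (1 + β i) := by
    rw [abs_mul]
    exact mul_le_mul (abs_integral_le_one_add_integral_abs_pow hk0 (hU i))
      (abs_integral_le_one_add_integral_abs_pow hk0 (hV i)) (abs_nonneg _) (by linarith [hα i])
  rw [hindep.integral_prod_mul_prod_sub_eq_prod_sub_prod (fun i => (hU i).aemeasurable)
    (fun i => (hV i).aemeasurable)]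
  refine (abs_prod_sub_prod_le (fun i => by nlinarith [hα i, hβ i]) hmean_mul hmul_mean _).trans ?_
  gcongr ?_ * _
  calc ∏ i, (1 + α i) * (1 + β i)
      ≤ ∏ i, ((1 + α i ^ (k⁻¹ : ℝ)) * (1 + β i ^ (k⁻¹ : ℝ))) ^ k := by
        gcongr with i
        rw [mul_pow]
        gcongr
        · exact one_add_le_one_add_rpow_inv_pow hk0 (hα i)
        · exact one_add_le_one_add_rpow_inv_pow hk0 (hβ i)
    _ ≤ (3 * ∏ i, (1 + α i ^ (k⁻¹ : ℝ)) * (1 + β i ^ (k⁻¹ : ℝ))) ^ k := by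
        rw [Finset.prod_pow]
        gcongr
        exact le_mul_of_one_le_left (by positivity) (by norm_num)
end

section
/- Let M be a p×p correlation matrix (symmetric positive semidefinite with all diagonal entries 1) with eigenvalues λ₁ ≥ ⋯ ≥ λ_p. Then λ₁+⋯+λ_k ≥ k for each 1 ≤ k ≤ p, and λ₁+⋯+λ_p = p. Conversely, for any τ₁ ≥ ⋯ ≥ τ_p ≥ 0 satisfying τ₁+⋯+τ_k ≥ k for all k and ∑τᵢ = p, there exists a correlation matrix with eigenvalues τ₁,…,τ_p. -/
/-!
The eigenvalues of a correlation matrix sum to its trace `p`, and for decreasingly ordered values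
the mean of the `k` largest dominates the overall mean `1` (Chebyshev's sum inequality).

Conversely, start from `diagonal τ`, whose trace is `p`. While some diagonal entry differs from `1`,
there are indices `a, b` with entries below and above `1`; by the intermediate value theorem a
rotation in the `(a, b)`-plane makes the new `(a, a)` entry equal to `1`, and it leaves the diagonal
outside `{a, b}` untouched. Orthogonal conjugation preserves the trace, positive semidefiniteness and
the characteristic polynomial, hence the spectrum.
-/

open Finset Matrix Real

lemma Finset.exists_gt_of_sum_eq_of_lt {ι M : Type*} [AddCommMonoid M] [LinearOrder M]
    [IsOrderedCancelAddMonoid M] {s : Finset ι} {f g : ι → M} (h : ∑ i ∈ s, f i = ∑ i ∈ s, g i)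
    {j : ι} (hj : j ∈ s) (hlt : f j < g j) : ∃ i ∈ s, g i < f i := by
  by_contra! hle
  exact hlt.ne ((sum_eq_sum_iff_of_le hle).1 h j hj)

lemma Fintype.exists_perm_of_map_univ_val_eq {ι α : Type*} [Fintype ι] [DecidableEq α]
    {f g : ι → α} (h : univ.val.map f = univ.val.map g) :
    ∃ σ : Equiv.Perm ι, ∀ i, f i = g (σ i) := by
  classical
  have hfiber (c : α) : Fintype.card {i // f i = c} = Fintype.card {i // g i = c} := by
    have hcount := congrArg (Multiset.count c) h
    simp only [Multiset.count_map] at hcount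
    simp only [Fintype.card_subtype, card_def, filter_val, eq_comm (b := c)]
    exact hcount
  exact ⟨Equiv.ofFiberEquiv fun c => Fintype.equivOfCardEq (hfiber c),
    fun i => (Equiv.ofFiberEquiv_map _ i).symm⟩

lemma Antitone.card_mul_sum_le_mul_sum_filter_lt {p : ℕ} {f : Fin p → ℝ} (hf : Antitone f)
    {k : ℕ} (hk : k ≤ p) :
    (k : ℝ) * ∑ i, f i ≤ p * ∑ i ∈ univ.filter (fun i : Fin p => (i : ℕ) < k), f i := by
  set g : Fin p → ℝ := fun i => if (i : ℕ) < k then 1 else 0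
  have hg : Antitone g := fun i j (hij : (i : ℕ) ≤ j) => by
    simp only [g]
    split_ifs <;> first | omega | norm_num
  have hsum_g : ∑ i, g i = k := by
    simp [g, Fin.card_filter_val_lt, min_eq_right hk]
  simpa [g, hsum_g, mul_comm, sum_filter] using (hf.monovary hg).sum_mul_sum_le_card_mul_sum

lemma Antitone.le_sum_filter_lt_of_sum_eq {p : ℕ} {f : Fin p → ℝ} (hf : Antitone f)
    (hsum : ∑ i, f i = p) {k : ℕ} (hk : k ≤ p) :
    (k : ℝ) ≤ ∑ i ∈ univ.filter (fun i : Fin p => (i : ℕ) < k), f i := by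
  obtain rfl | hp := p.eq_zero_or_pos
  · simp [Nat.le_zero.1 hk]
  have hcheb := hf.card_mul_sum_le_mul_sum_filter_lt hk
  rw [hsum, mul_comm] at hcheb
  exact le_of_mul_le_mul_left hcheb (Nat.cast_pos.2 hp)

section OrthogonalConj

variable {n : Type*} [Fintype n] [DecidableEq n]

omit [DecidableEq n] in
lemma mul_mul_transpose_apply_self (A M : Matrix n n ℝ) (i : n) :
    (A * M * Aᵀ) i i = A i ⬝ᵥ M *ᵥ A i := by
  simp only [mul_apply', dotProduct_mulVec]
  rfl

lemma trace_conj_of_mem_orthogonalGroup {G : Matrix n n ℝ} (hG : G ∈ orthogonalGroup n ℝ)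
    (M : Matrix n n ℝ) : (G * M * Gᵀ).trace = M.trace := by
  rw [trace_mul_comm, ← Matrix.mul_assoc, (mem_orthogonalGroup_iff' n ℝ).1 hG, Matrix.one_mul]

lemma charpoly_conj_of_mem_orthogonalGroup {G : Matrix n n ℝ} (hG : G ∈ orthogonalGroup n ℝ)
    (M : Matrix n n ℝ) : (G * M * Gᵀ).charpoly = M.charpoly := by
  rw [charpoly_mul_comm, ← Matrix.mul_assoc, (mem_orthogonalGroup_iff' n ℝ).1 hG, Matrix.one_mul]

lemma Matrix.roots_charpoly_diagonal {R : Type*} [CommRing R] [IsDomain R] (d : n → R) :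
    (diagonal d).charpoly.roots = univ.val.map d := by
  rw [charpoly_diagonal, Polynomial.roots_prod _ _
    (prod_ne_zero_iff.2 fun i _ => Polynomial.X_sub_C_ne_zero (d i))]
  simp

lemma Matrix.IsHermitian.exists_perm_eigenvalues_eq_of_charpoly_eq_diagonal {A : Matrix n n ℝ}
    (hA : A.IsHermitian) {d : n → ℝ} (h : A.charpoly = (diagonal d).charpoly) :
    ∃ σ : Equiv.Perm n, ∀ i, d i = hA.eigenvalues (σ i) := by
  refine Fintype.exists_perm_of_map_univ_val_eq ?_
  simpa [h, roots_charpoly_diagonal] using hA.roots_charpoly_eq_eigenvalues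

noncomputable def planeRotation (a b : n) (θ : ℝ) : Matrix n n ℝ :=
  of fun i => if i = a then cos θ • Pi.single a 1 + sin θ • Pi.single b 1
    else if i = b then -sin θ • Pi.single a 1 + cos θ • Pi.single b 1 else Pi.single i 1

variable {a b : n}

omit [Fintype n] in
lemma planeRotation_row_left (θ : ℝ) :
    planeRotation a b θ a = cos θ • Pi.single a 1 + sin θ • Pi.single b 1 :=
  if_pos rfl

omit [Fintype n] in
lemma planeRotation_row_of_ne (θ : ℝ) {i : n} (hia : i ≠ a) (hib : i ≠ b) :
    planeRotation a b θ i = Pi.single i 1 :=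
  (if_neg hia).trans (if_neg hib)

lemma planeRotation_mem_orthogonalGroup (hab : a ≠ b) (θ : ℝ) :
    planeRotation a b θ ∈ orthogonalGroup n ℝ := by
  have hrow (k : n) : planeRotation a b θ k =
      if k = a then cos θ • Pi.single a 1 + sin θ • Pi.single b 1
      else if k = b then -sin θ • Pi.single a 1 + cos θ • Pi.single b 1 else Pi.single k 1 :=
    rfl
  rw [mem_orthogonalGroup_iff]
  ext i j
  rw [mul_apply', one_apply]
  change planeRotation a b θ i ⬝ᵥ planeRotation a b θ j = _
  rw [hrow, hrow]
  split_ifs <;> subst_vars <;> simp_all [← sq, mul_comm (cos θ)]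

lemma planeRotation_conj_apply_of_ne (M : Matrix n n ℝ) (θ : ℝ) {i : n} (hia : i ≠ a)
    (hib : i ≠ b) : (planeRotation a b θ * M * (planeRotation a b θ)ᵀ) i i = M i i := by
  simp [mul_mul_transpose_apply_self, planeRotation_row_of_ne θ hia hib]

lemma planeRotation_conj_apply_left (M : Matrix n n ℝ) (θ : ℝ) :
    (planeRotation a b θ * M * (planeRotation a b θ)ᵀ) a a =
      cos θ ^ 2 * M a a + cos θ * sin θ * (M a b + M b a) + sin θ ^ 2 * M b b := by
  simp [mul_mul_transpose_apply_self, planeRotation_row_left, mulVec_add, mulVec_smul]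
  ring

lemma exists_planeRotation_conj_apply_left_eq (M : Matrix n n ℝ) {t : ℝ} (ha : M a a ≤ t)
    (hb : t ≤ M b b) : ∃ θ, (planeRotation a b θ * M * (planeRotation a b θ)ᵀ) a a = t := by
  simp only [planeRotation_conj_apply_left]
  have hcont : Continuous fun θ : ℝ =>
      cos θ ^ 2 * M a a + cos θ * sin θ * (M a b + M b a) + sin θ ^ 2 * M b b := by
    fun_prop
  obtain ⟨θ, -, hθ⟩ := intermediate_value_Icc (by positivity : 0 ≤ π / 2) hcont.continuousOn
    (by simpa using And.intro ha hb)
  exact ⟨θ, hθ⟩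

theorem exists_orthogonal_conj_diag_eq (t : ℝ) (M : Matrix n n ℝ)
    (hM : M.trace = Fintype.card n * t) :
    ∃ G ∈ orthogonalGroup n ℝ, ∀ i, (G * M * Gᵀ) i i = t := by
  induction hk : #{i | M i i ≠ t} using Nat.strong_induction_on generalizing M with
  | _ k ih =>
  by_cases hall : ∀ i, M i i = t
  · exact ⟨1, one_mem _, by simpa using hall⟩
  push Not at hall
  obtain ⟨j, hj⟩ := hall
  have hsum : ∑ i, M i i = ∑ _i : n, t := by simpa [trace] using hM
  obtain ⟨a, -, ha⟩ : ∃ a ∈ univ, M a a < t := by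
    rcases hj.lt_or_gt with hlt | hgt
    · exact ⟨j, mem_univ _, hlt⟩
    · exact exists_gt_of_sum_eq_of_lt hsum.symm (mem_univ j) hgt
  obtain ⟨b, -, hb⟩ := exists_gt_of_sum_eq_of_lt hsum (mem_univ a) ha
  have hab : a ≠ b := by rintro rfl; linarith
  obtain ⟨θ, hθ⟩ := exists_planeRotation_conj_apply_left_eq (b := b) M ha.le hb.le
  set R := planeRotation a b θ
  have hR : R ∈ orthogonalGroup n ℝ := planeRotation_mem_orthogonalGroup hab θ
  have hfewer : #{i | (R * M * Rᵀ) i i ≠ t} < k := by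
    refine hk ▸ card_lt_card ⟨fun i hi => ?_, fun hsub => ?_⟩
    · simp only [mem_filter, mem_univ, true_and] at hi ⊢
      by_cases hib : i = b
      · exact hib ▸ hb.ne'
      · have hia : i ≠ a := by rintro rfl; exact hi hθ
        rwa [← planeRotation_conj_apply_of_ne M θ hia hib]
    · have ha' := hsub (show a ∈ _ by simpa using ha.ne)
      simp only [mem_filter, mem_univ, true_and] at ha'
      exact ha' hθ
  have htrace : (R * M * Rᵀ).trace = Fintype.card n * t := by
    rw [trace_conj_of_mem_orthogonalGroup hR, hM]
  obtain ⟨G, hG, hdiag⟩ := ih _ hfewer (R * M * Rᵀ) htrace rfl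
  refine ⟨G * R, mul_mem hG hR, fun i => ?_⟩
  simpa [Matrix.mul_assoc] using hdiag i

end OrthogonalConj

/-- A correlation matrix (symmetric positive semidefinite, unit diagonal) with decreasingly
ordered eigenvalues `λ₁ ≥ ⋯ ≥ λ_p` satisfies `λ₁+⋯+λ_k ≥ k` for all `k ≤ p` and
`λ₁+⋯+λ_p = p`; conversely, any decreasing non-negative `τ₁ ≥ ⋯ ≥ τ_p` with these
majorization properties arises as the eigenvalues of some correlation matrix. -/
theorem correlation_matrix_eigenvalues_majorize (p : ℕ) :
    (∀ (M : Matrix (Fin p) (Fin p) ℝ) (hM : M.PosSemidef), (∀ i, M i i = 1) →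
      ∀ lam : Fin p → ℝ, Antitone lam →
      (∃ σ : Equiv.Perm (Fin p), ∀ i, lam i = hM.1.eigenvalues (σ i)) →
      (∀ k : ℕ, k ≤ p →
          (k : ℝ) ≤ ∑ i ∈ Finset.univ.filter (fun i : Fin p => (i : ℕ) < k), lam i)
        ∧ (∑ i, lam i) = p)
    ∧ (∀ τ : Fin p → ℝ, Antitone τ → (∀ i, 0 ≤ τ i) →
        (∀ k : ℕ, k ≤ p →
          (k : ℝ) ≤ ∑ i ∈ Finset.univ.filter (fun i : Fin p => (i : ℕ) < k), τ i) →
        (∑ i, τ i) = p →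
        ∃ (M : Matrix (Fin p) (Fin p) ℝ) (hM : M.PosSemidef), (∀ i, M i i = 1) ∧
          ∃ σ : Equiv.Perm (Fin p), ∀ i, τ i = hM.1.eigenvalues (σ i)) := by
  refine ⟨fun M hM hdiag lam hlam ⟨σ, hσ⟩ => ?_, fun τ _ hτ _ hsum => ?_⟩
  · have hsum : ∑ i, lam i = p :=
      calc ∑ i, lam i = ∑ i, hM.1.eigenvalues (σ i) := by simp only [hσ]
        _ = ∑ i, hM.1.eigenvalues i := Equiv.sum_comp σ _
        _ = M.trace := by simp [hM.1.trace_eq_sum_eigenvalues]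
        _ = p := by simp [trace, hdiag]
    exact ⟨fun k hk => hlam.le_sum_filter_lt_of_sum_eq hsum hk, hsum⟩
  · obtain ⟨G, hG, hdiag⟩ := exists_orthogonal_conj_diag_eq 1 (diagonal τ) (by simp [hsum])
    have hN : (G * diagonal τ * Gᵀ).PosSemidef := by
      simpa using (posSemidef_diagonal_iff.2 hτ).mul_mul_conjTranspose_same G
    exact ⟨_, hN, hdiag, hN.1.exists_perm_eigenvalues_eq_of_charpoly_eq_diagonal
      (charpoly_conj_of_mem_orthogonalGroup hG _)⟩
end
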